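/- arXiv:1604.02624 — 3 statements merged into one kernel-verified Lean document; each statement's English description precedes it below -/
import Mathlib

section
/- Let s > 0 be real. For every real τ with τ > e^s and τ ≠ e^{(2n+1)s} for all n ≥ 0, define F(τ) = ∑_{n=0}^∞ 1/(e^{(2n+1)s} − τ). Then F has a zero in the open interval (e^s, e^{3s}): there exists τ₀ with e^s < τ₀ < e^{3s} and F(τ₀) = 0. -/
set_option maxHeartbeats 1000000

theorem resonance_condition_has_zero (s : ℝ) (hs : 0 < s) :
    ∃ τ₀ : ℝ, Real.exp s < τ₀ ∧ τ₀ < Real.exp (3 * s) ∧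
      (∑' n : ℕ, 1 / (Real.exp ((2 * n + 1) * s) - τ₀)) = 0 := by
  set A := Real.exp s with hAdef
  set B := Real.exp (3 * s) with hBdef
  have hA : 0 < A := Real.exp_pos _
  have hB : 0 < B := Real.exp_pos _
  have hAB : A < B := Real.exp_lt_exp.mpr (by linarith)
  set a : ℕ → ℝ := fun n => Real.exp ((2 * n + 1) * s) with hadef
  have ha0 : a 0 = A := by simp [hadef, hAdef]
  have ha1 : a 1 = B := by norm_num [hadef, hBdef]
  set r : ℝ := Real.exp (-(2 * s)) with hrdef
  have hr0 : 0 < r := Real.exp_pos _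
  have hr1 : r < 1 := by
    rw [hrdef, Real.exp_lt_one_iff]; linarith
  set g : ℕ → ℝ := fun n => Real.exp (-(3 * s)) * r ^ n with hgdef
  have hgsum : Summable g := (summable_geometric_of_lt_one hr0.le hr1).mul_left _
  have hgpos : ∀ n, 0 < g n := fun n => mul_pos (Real.exp_pos _) (pow_pos hr0 n)
  have hg_eq : ∀ n : ℕ, g n = (a (n + 1))⁻¹ := by
    intro n
    rw [hgdef, hadef]
    simp only [hrdef, ← Real.exp_nat_mul, ← Real.exp_add, ← Real.exp_neg]
    congr 1
    push_cast
    ring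
  have haB : ∀ n : ℕ, B ≤ a (n + 1) := by
    intro n
    rw [hadef, hBdef]
    apply Real.exp_le_exp.mpr
    have : (3 : ℝ) ≤ 2 * (n + 1 : ℕ) + 1 := by push_cast; linarith [Nat.cast_nonneg (α := ℝ) n]
    nlinarith
  have hapos : ∀ n, 0 < a n := fun n => Real.exp_pos _
  -- key bound: for 0 < t ≤ x < B, (a (n+1) - t)⁻¹ ≤ (B / (B - x)) * g n
  have key : ∀ x t : ℝ, 0 < t → t ≤ x → x < B → ∀ n : ℕ,
      0 < a (n + 1) - t ∧ (a (n + 1) - t)⁻¹ ≤ (B / (B - x)) * g n := by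
    intro x t ht htx hxB n
    have h1 : B ≤ a (n + 1) := haB n
    have hpos : 0 < a (n + 1) - t := by linarith
    refine ⟨hpos, ?_⟩
    have hxa : x * a (n + 1) ≥ x * B := by nlinarith
    have hlow : a (n + 1) * (B - x) / B ≤ a (n + 1) - t := by
      rw [div_le_iff₀ hB]
      nlinarith
    have hlowpos : 0 < a (n + 1) * (B - x) / B := div_pos (mul_pos (hapos _) (by linarith)) hB
    calc (a (n + 1) - t)⁻¹ ≤ (a (n + 1) * (B - x) / B)⁻¹ := by
          exact inv_anti₀ hlowpos hlow
      _ = (B / (B - x)) * (a (n + 1))⁻¹ := by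
          field_simp
      _ = (B / (B - x)) * g n := by rw [hg_eq n]
  -- summability of the series for 0 < t ≤ x < B (t ≠ a 0)
  have hsum : ∀ x t : ℝ, 0 < t → t ≤ x → x < B →
      Summable (fun n : ℕ => 1 / (a n - t)) := by
    intro x t ht htx hxB
    rw [← summable_nat_add_iff 1]
    refine Summable.of_nonneg_of_le (f := fun n => (B / (B - x)) * g n)
      (fun n => ?_) (fun n => ?_) (hgsum.mul_left _)
    · have := (key x t ht htx hxB n).1
      positivity
    · rw [one_div]
      exact (key x t ht htx hxB n).2
  set m : ℝ := (A + B) / 2 with hmdef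
  have hAm : A < m := by rw [hmdef]; linarith
  have hmB : m < B := by rw [hmdef]; linarith
  set G : ℝ := ∑' n, g n with hGdef
  have hG0 : 0 ≤ G := tsum_nonneg fun n => (hgpos n).le
  set K : ℝ := B / (B - m) * G with hKdef
  have hK0 : 0 ≤ K := mul_nonneg (div_nonneg hB.le (by linarith)) hG0
  set ε : ℝ := min ((B - A) / 4) (1 / (K + 1)) with hεdef
  have hε0 : 0 < ε := by
    apply lt_min (by linarith) (by positivity)
  have hε1 : ε ≤ (B - A) / 4 := min_le_left _ _
  have hε2 : ε ≤ 1 / (K + 1) := min_le_right _ _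
  set τ₁ : ℝ := A + ε with hτ₁def
  set τ₂ : ℝ := B - ε with hτ₂def
  have hτ₁m : τ₁ ≤ m := by rw [hτ₁def, hmdef]; linarith
  have hmτ₂ : m ≤ τ₂ := by rw [hτ₂def, hmdef]; linarith
  have hτ₁pos : 0 < τ₁ := by rw [hτ₁def]; linarith
  have hτ₂B : τ₂ < B := by rw [hτ₂def]; linarith
  have hτ₁τ₂ : τ₁ ≤ τ₂ := le_trans hτ₁m hmτ₂
  set F : ℝ → ℝ := fun t => ∑' n : ℕ, 1 / (a n - t) with hFdef
  -- continuity on Icc τ₁ τ₂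
  have hcont : ContinuousOn F (Set.Icc τ₁ τ₂) := by
    rw [hFdef]
    apply continuousOn_tsum (u := fun n => if n = 0 then ε⁻¹ else (B / (B - τ₂)) * g (n - 1))
    · intro i
      apply ContinuousOn.div continuousOn_const
      · exact (continuousOn_const.sub continuousOn_id)
      · intro t ht
        rcases Nat.eq_zero_or_pos i with h | h
        · subst h
          rw [ha0]
          have : τ₁ ≤ t := ht.1
          intro hc; rw [sub_eq_zero] at hc
          rw [hτ₁def] at this; linarith [hc ▸ this]
        · obtain ⟨j, rfl⟩ := Nat.exists_eq_add_of_lt h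
          simp only [zero_add]
          have := (key τ₂ t (lt_of_lt_of_le hτ₁pos ht.1) ht.2 hτ₂B j).1
          intro hc; rw [sub_eq_zero] at hc; rw [hc] at this; linarith
    · rw [← summable_nat_add_iff 1]
      simp only [Nat.add_sub_cancel, if_neg (Nat.succ_ne_zero _)]
      exact hgsum.mul_left _
    · intro n t ht
      rcases Nat.eq_zero_or_pos n with h | h
      · subst h
        have h1 : τ₁ ≤ t := ht.1
        have h2 : A - t ≤ -ε := by rw [hτ₁def] at h1; linarith
        rw [if_pos rfl, ha0]
        calc ‖(1 : ℝ) / (A - t)‖ = (t - A)⁻¹ := by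
              rw [Real.norm_eq_abs, abs_div, abs_one,
                abs_of_nonpos (by linarith : A - t ≤ 0), one_div]
              ring_nf
          _ ≤ ε⁻¹ := inv_anti₀ hε0 (by linarith)
      · obtain ⟨j, rfl⟩ := Nat.exists_eq_add_of_lt h
        simp only [zero_add, if_neg (Nat.succ_ne_zero _), Nat.add_sub_cancel]
        obtain ⟨hp, hle⟩ := key τ₂ t (lt_of_lt_of_le hτ₁pos ht.1) ht.2 hτ₂B j
        rw [Real.norm_eq_abs, abs_div, abs_one, abs_of_pos hp, one_div]
        exact hle
  -- F τ₁ < 0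
  have hsum1 : Summable (fun n : ℕ => 1 / (a n - τ₁)) := hsum m τ₁ hτ₁pos hτ₁m hmB
  have hF1 : F τ₁ < 0 := by
    have heq : F τ₁ = 1 / (a 0 - τ₁) + ∑' n : ℕ, 1 / (a (n + 1) - τ₁) :=
      Summable.tsum_eq_zero_add hsum1
    have htail : (∑' n : ℕ, 1 / (a (n + 1) - τ₁)) ≤ K := by
      rw [hKdef, hGdef, ← tsum_mul_left]
      apply Summable.tsum_le_tsum _ ((summable_nat_add_iff (f := fun n : ℕ => 1 / (a n - τ₁)) 1).mpr hsum1) (hgsum.mul_left _)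
      intro n
      rw [one_div]
      exact (key m τ₁ hτ₁pos hτ₁m hmB n).2
    have h0 : 1 / (a 0 - τ₁) = -(1 / ε) := by
      rw [ha0, hτ₁def]
      rw [show A - (A + ε) = -ε by ring, one_div, one_div, inv_neg]
    have hεK : 1 / ε ≥ K + 1 := by
      rw [ge_iff_le, le_div_iff₀ hε0]
      calc (K + 1) * ε ≤ (K + 1) * (1 / (K + 1)) := by
            apply mul_le_mul_of_nonneg_left hε2 (by linarith)
        _ = 1 := mul_one_div_cancel (by linarith)
    rw [heq, h0]
    linarith
  -- F τ₂ > 0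
  have hτ₂pos : 0 < τ₂ := lt_of_lt_of_le hτ₁pos hτ₁τ₂
  have hsum2 : Summable (fun n : ℕ => 1 / (a n - τ₂)) := hsum τ₂ τ₂ hτ₂pos le_rfl hτ₂B
  have hF2 : 0 < F τ₂ := by
    have e2 : F τ₂ = 1 / (a 0 - τ₂) + ∑' n : ℕ, 1 / (a (n + 1) - τ₂) :=
      Summable.tsum_eq_zero_add hsum2
    have e3 : (∑' n : ℕ, 1 / (a (n + 1) - τ₂))
        = 1 / (a 1 - τ₂) + ∑' n : ℕ, 1 / (a (n + 2) - τ₂) :=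
      Summable.tsum_eq_zero_add ((summable_nat_add_iff (f := fun n : ℕ => 1 / (a n - τ₂)) 1).mpr hsum2)
    have heq : F τ₂ = 1 / (a 0 - τ₂) + (1 / (a 1 - τ₂) + ∑' n : ℕ, 1 / (a (n + 2) - τ₂)) := by
      rw [e2, e3]
    have htail : 0 ≤ ∑' n : ℕ, 1 / (a (n + 2) - τ₂) := by
      apply tsum_nonneg
      intro n
      have := (key τ₂ τ₂ hτ₂pos le_rfl hτ₂B (n + 1)).1
      positivity
    have h1 : 1 / (a 1 - τ₂) = 1 / ε := by rw [ha1, hτ₂def]; ring_nf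
    have h0 : 1 / (a 0 - τ₂) ≥ -(2 / (B - A)) := by
      rw [ha0]
      have hAτ₂ : A < τ₂ := lt_of_lt_of_le hAm hmτ₂
      have h2 : (B - A) / 2 ≤ τ₂ - A := by
        rw [hmdef] at hmτ₂; linarith
      have hx : 1 / (τ₂ - A) ≤ 2 / (B - A) := by
        rw [div_le_div_iff₀ (by linarith) (by linarith)]; nlinarith
      have hy : 1 / (A - τ₂) = -(1 / (τ₂ - A)) := by
        rw [show A - τ₂ = -(τ₂ - A) from by ring, div_neg]
      rw [hy]; linarith
    have hεbig : 4 / (B - A) ≤ 1 / ε := by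
      rw [div_le_div_iff₀ (by linarith) hε0]
      linarith
    have : 2 / (B - A) < 4 / (B - A) := by
      rw [div_lt_div_iff₀ (by linarith) (by linarith)]; nlinarith
    rw [heq, h1]
    linarith
  -- IVT
  have hivt := intermediate_value_Icc hτ₁τ₂ hcont
  have h0mem : (0 : ℝ) ∈ Set.Icc (F τ₁) (F τ₂) := ⟨hF1.le, hF2.le⟩
  obtain ⟨τ₀, hτ₀mem, hτ₀⟩ := hivt h0mem
  refine ⟨τ₀, ?_, ?_, hτ₀⟩
  · calc A < τ₁ := by rw [hτ₁def]; linarith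
      _ ≤ τ₀ := hτ₀mem.1
  · calc τ₀ ≤ τ₂ := hτ₀mem.2
      _ < B := hτ₂B
end

section
/- Let α > 0, t ≠ 0 real, and let ξ, η be real numbers with cosh ξ − cos η > 0 and cosh(ξ − 2t) − cos η > 0. Set ζ = α coth((ξ − iη)/2) ∈ ℂ. Then |ζ − α coth t|² = (α/sinh t)² (cosh(ξ − 2t) − cos η)/(cosh ξ − cos η). -/
noncomputable def coth (x : ℝ) : ℝ := Real.cosh x / Real.sinh x

noncomputable def ccoth (w : ℂ) : ℂ := Complex.cosh w / Complex.sinh w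

/-!
Writing `w = (ξ - iη)/2`, the addition formula for `sinh` gives
`coth w - coth t = sinh (t - w) / (sinh w sinh t)`, and `|sinh (x + iy)|² = (cosh 2x - cos 2y)/2`
evaluates both numerator and denominator.
-/

open Complex

lemma ofReal_coth (x : ℝ) : ((coth x : ℝ) : ℂ) = ccoth x := by
  simp [coth, ccoth]

lemma ccoth_sub_ccoth {z w : ℂ} (hz : sinh z ≠ 0) (hw : sinh w ≠ 0) :
    ccoth z - ccoth w = sinh (w - z) / (sinh z * sinh w) := by
  rw [ccoth, ccoth, sinh_sub]
  field_simp

lemma sinh_eq_re_add_im_mul_I (z : ℂ) :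
    sinh z = (Real.sinh z.re * Real.cos z.im : ℝ) + (Real.cosh z.re * Real.sin z.im : ℝ) * I := by
  conv_lhs => rw [← re_add_im z]
  rw [sinh_add, sinh_mul_I, cosh_mul_I]
  push_cast
  ring

lemma normSq_sinh (z : ℂ) :
    normSq (sinh z) = (Real.cosh (2 * z.re) - Real.cos (2 * z.im)) / 2 := by
  rw [sinh_eq_re_add_im_mul_I, normSq_add_mul_I, Real.cosh_two_mul, Real.cos_two_mul]
  nlinarith [Real.sin_sq_add_cos_sq z.im, Real.cosh_sq_sub_sinh_sq z.re]

theorem distance_to_image_charge_bispherical_general (α t ξ η : ℝ) (ht : t ≠ 0)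
    (h1 : Real.cosh ξ - Real.cos η > 0)
    (ζ : ℂ) (hζ : ζ = α * ccoth ((ξ - Complex.I * η) / 2)) :
    ‖ζ - (α * coth t : ℝ)‖ ^ 2 =
      (α / Real.sinh t) ^ 2 * (Real.cosh (ξ - 2 * t) - Real.cos η) / (Real.cosh ξ - Real.cos η) := by
  set w : ℂ := (ξ - I * η) / 2
  have hw : normSq (sinh w) = (Real.cosh ξ - Real.cos η) / 2 := by
    rw [normSq_sinh, show 2 * w.re = ξ by simp [w]; ring, show 2 * w.im = -η by simp [w]; ring,
      Real.cos_neg]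
  have htw : normSq (sinh (t - w)) = (Real.cosh (ξ - 2 * t) - Real.cos η) / 2 := by
    rw [normSq_sinh, show 2 * (t - w).re = -(ξ - 2 * t) by simp [w]; ring,
      show 2 * (t - w).im = η by simp [w]; ring, Real.cosh_neg]
  have hw0 : sinh w ≠ 0 := fun h => by rw [h, map_zero] at hw; linarith
  have ht0 : sinh (t : ℂ) ≠ 0 := by exact_mod_cast Real.sinh_ne_zero.mpr ht
  rw [hζ, ofReal_mul, ofReal_coth, ← mul_sub, ccoth_sub_ccoth hw0 ht0, Complex.sq_norm, normSq_mul,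
    normSq_div, normSq_mul, htw, hw, normSq_ofReal, ← ofReal_sinh, normSq_ofReal]
  field_simp

theorem distance_to_image_charge_bispherical (α t ξ η : ℝ) (hα : 0 < α) (ht : t ≠ 0)
    (h1 : Real.cosh ξ - Real.cos η > 0) (h2 : Real.cosh (ξ - 2 * t) - Real.cos η > 0)
    (ζ : ℂ) (hζ : ζ = α * ccoth ((ξ - Complex.I * η) / 2)) :
    ‖ζ - (α * coth t : ℝ)‖ ^ 2 =
      (α / Real.sinh t) ^ 2 * (Real.cosh (ξ - 2 * t) - Real.cos η) / (Real.cosh ξ - Real.cos η) :=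
  distance_to_image_charge_bispherical_general α t ξ η ht h1 ζ hζ
end

section
/- Let s > 0 and fix a nonnegative integer n. For real τ in a punctured neighborhood of e^{(2n+1)s} (with τ > e^s, τ ≠ e^{(2k+1)s} for all k), define K₀(τ) = (∑_{k=0}^∞ (2k+1)/(e^{(2k+1)s} − τ)) / (∑_{k=0}^∞ 1/(e^{(2k+1)s} − τ)) whenever the denominator is nonzero, and A(τ) = (2n + 1 − K₀(τ))/(e^{(2n+1)s} − τ). Then A(τ) has a finite limit as τ → e^{(2n+1)s}; in particular the apparent singularity of A at τ = e^{(2n+1)s} is removable. -/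
/-! Write `p k = exp ((2k+1)s)`. Subtracting `(2n+1)` times the denominator series from the
numerator series gives `N τ = ∑ (2n-2k)/(p k - τ)`, whose `n`-th term vanishes, and the denominator
times `p n - τ` is `1 + (p n - τ) M τ`, where `M` is the denominator series without its `n`-th term.
So `A = N / (1 + (p n - τ) M)`. Consecutive poles differ by the factor `e^{2s}`, so on a small ball
around `p n` every other pole `p k` stays at distance `≥ c p k`; this makes `N` and `M` uniformly
convergent, hence continuous, there, and `A τ → N (p n)`. -/

open Filter Topology

section PoleSeries

variable {B : Set ℝ} {a p d : ℕ → ℝ}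

theorem norm_div_sub_le (hd : ∀ k, a k ≠ 0 → ∀ τ ∈ B, d k ≤ |p k - τ|) (hd0 : ∀ k, 0 < d k)
    (k : ℕ) {τ : ℝ} (hτ : τ ∈ B) : ‖a k / (p k - τ)‖ ≤ |a k| / d k := by
  rcases eq_or_ne (a k) 0 with ha | ha
  · simp [ha]
  · rw [norm_div, Real.norm_eq_abs, Real.norm_eq_abs]
    exact div_le_div_of_nonneg_left (abs_nonneg _) (hd0 k) (hd k ha τ hτ)

theorem summable_div_sub (hd : ∀ k, a k ≠ 0 → ∀ τ ∈ B, d k ≤ |p k - τ|) (hd0 : ∀ k, 0 < d k)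
    (ha : Summable fun k => |a k| / d k) {τ : ℝ} (hτ : τ ∈ B) :
    Summable fun k => a k / (p k - τ) :=
  .of_norm_bounded ha fun k => norm_div_sub_le hd hd0 k hτ

theorem continuousOn_tsum_div_sub (hd : ∀ k, a k ≠ 0 → ∀ τ ∈ B, d k ≤ |p k - τ|)
    (hd0 : ∀ k, 0 < d k) (ha : Summable fun k => |a k| / d k) :
    ContinuousOn (fun τ => ∑' k, a k / (p k - τ)) B := by
  refine continuousOn_tsum (fun k => ?_) ha fun k τ hτ => norm_div_sub_le hd hd0 k hτ
  rcases eq_or_ne (a k) 0 with hak | hak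
  · simp only [hak, zero_div]
    exact continuousOn_const
  · refine continuousOn_const.div (continuousOn_const.sub continuousOn_id) fun τ hτ => ?_
    exact abs_pos.mp ((hd0 k).trans_le (hd k hak τ hτ))

end PoleSeries

theorem sub_tsum_div_tsum_div_eq {p : ℕ → ℝ} {n : ℕ} {τ : ℝ} (hτ : ∀ k, τ ≠ p k)
    (hM : Summable fun k => (if k = n then 0 else 1 : ℝ) / (p k - τ))
    (hN : Summable fun k => (2 * (n : ℝ) - 2 * k) / (p k - τ))
    (hG : ∑' k, 1 / (p k - τ) ≠ 0) :
    (2 * (n : ℝ) + 1 - (∑' k : ℕ, (2 * (k : ℝ) + 1) / (p k - τ)) / ∑' k, 1 / (p k - τ)) /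
        (p n - τ) =
      (∑' k, (2 * (n : ℝ) - 2 * k) / (p k - τ)) /
        (1 + (p n - τ) * ∑' k, (if k = n then 0 else 1 : ℝ) / (p k - τ)) := by
  have hpole : p n - τ ≠ 0 := sub_ne_zero.mpr (hτ n).symm
  have hsplit : ∀ k, 1 / (p k - τ) =
      (if k = n then 0 else 1 : ℝ) / (p k - τ) + if k = n then 1 / (p n - τ) else 0 := by
    intro k
    split_ifs with h <;> simp [h]
  have hfin : Summable fun k => if k = n then 1 / (p n - τ) else (0 : ℝ) :=
    summable_of_ne_finset_zero (s := {n}) fun k hk => if_neg (by simpa using hk)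
  have hGs : Summable fun k => 1 / (p k - τ) := (hM.add hfin).congr fun k => (hsplit k).symm
  have hGval : ∑' k, 1 / (p k - τ) =
      (∑' k, (if k = n then 0 else 1 : ℝ) / (p k - τ)) + 1 / (p n - τ) := by
    rw [tsum_congr hsplit, hM.tsum_add hfin, tsum_ite_eq]
  have hFval : ∑' k : ℕ, (2 * (k : ℝ) + 1) / (p k - τ) =
      (2 * n + 1) * ∑' k, 1 / (p k - τ) - ∑' k, (2 * (n : ℝ) - 2 * k) / (p k - τ) := by
    rw [← tsum_mul_left, ← (hGs.mul_left _).tsum_sub hN]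
    congr 1 with k
    ring
  have hden : 1 + (p n - τ) * ∑' k, (if k = n then 0 else 1 : ℝ) / (p k - τ) =
      (p n - τ) * ∑' k, 1 / (p k - τ) := by
    rw [hGval]; field_simp; ring
  rw [hden, hFval]
  field_simp
  ring

theorem mul_le_abs_sub_of_separated {ρ x y τ : ℝ} (hx : 0 < x)
    (hxy : x ≤ ρ * y ∨ y ≤ ρ * x) (hτ : |τ - y| ≤ (1 - ρ) / 2 * y) :
    (1 - ρ) / 2 * x ≤ |x - τ| := by
  rcases le_or_gt 1 ρ with hρ | hρ
  · exact (mul_nonpos_of_nonpos_of_nonneg (by linarith) hx.le).trans (abs_nonneg _)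
  obtain ⟨hτl, hτu⟩ := abs_le.mp hτ
  rcases hxy with h | h
  · rw [abs_sub_comm]
    refine le_trans ?_ (le_abs_self _)
    nlinarith
  · refine le_trans ?_ (le_abs_self _)
    nlinarith [mul_le_mul_of_nonneg_left h (by linarith : (0 : ℝ) ≤ (3 - ρ) / 2),
      mul_nonneg hx.le (sq_nonneg (1 - ρ))]

theorem exp_odd_le_mul_exp_odd {s : ℝ} (hs : 0 ≤ s) {k n : ℕ} (hkn : k < n) :
    Real.exp ((2 * k + 1) * s) ≤ Real.exp (-(2 * s)) * Real.exp ((2 * n + 1) * s) := by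
  rw [← Real.exp_add, Real.exp_le_exp]
  have : (k : ℝ) + 1 ≤ n := by exact_mod_cast hkn
  nlinarith

theorem mul_exp_odd_le_abs_sub {s : ℝ} (hs : 0 ≤ s) {k n : ℕ} (hkn : k ≠ n) {τ : ℝ}
    (hτ : τ ∈ Metric.closedBall (Real.exp ((2 * n + 1) * s))
      ((1 - Real.exp (-(2 * s))) / 2 * Real.exp ((2 * n + 1) * s))) :
    (1 - Real.exp (-(2 * s))) / 2 * Real.exp ((2 * k + 1) * s) ≤
      |Real.exp ((2 * k + 1) * s) - τ| :=
  mul_le_abs_sub_of_separated (Real.exp_pos _)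
    ((lt_or_gt_of_ne hkn).imp (exp_odd_le_mul_exp_odd hs) (exp_odd_le_mul_exp_odd hs))
    (by simpa only [Real.dist_eq] using Metric.mem_closedBall.mp hτ)

theorem summable_succ_div_exp_odd {s : ℝ} (hs : 0 < s) :
    Summable fun k : ℕ => ((k : ℝ) + 1) / Real.exp ((2 * k + 1) * s) := by
  have h := ((Real.summable_pow_mul_exp_neg_nat_mul 1 (by linarith : 0 < 2 * s)).add
    (Real.summable_pow_mul_exp_neg_nat_mul 0 (by linarith : 0 < 2 * s))).mul_left (Real.exp (-s))
  refine h.congr fun k => ?_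
  have hexp : Real.exp (-((2 * k + 1) * s)) = Real.exp (-s) * Real.exp (-(2 * s) * k) := by
    rw [← Real.exp_add]; ring_nf
  rw [div_eq_mul_inv, ← Real.exp_neg, hexp]
  ring

theorem summable_abs_div_exp_odd {s c C : ℝ} (hs : 0 < s) (hc : 0 < c) {a : ℕ → ℝ}
    (ha : ∀ k, |a k| ≤ C * (k + 1)) :
    Summable fun k : ℕ => |a k| / (c * Real.exp ((2 * k + 1) * s)) := by
  refine ((summable_succ_div_exp_odd hs).mul_left (C / c)).of_nonneg_of_le
    (fun k => by positivity) fun k => ?_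
  rw [← mul_div_assoc, div_mul_eq_mul_div, div_div]
  gcongr
  exact ha k

theorem removable_singularity_of_An (s : ℝ) (hs : 0 < s) (n : ℕ) :
    ∃ L : ℝ, Filter.Tendsto
      (fun τ : ℝ =>
        (2 * (n : ℝ) + 1 -
            (∑' k : ℕ, (2 * (k : ℝ) + 1) / (Real.exp ((2 * k + 1) * s) - τ)) /
              (∑' k : ℕ, 1 / (Real.exp ((2 * k + 1) * s) - τ))) /
          (Real.exp ((2 * n + 1) * s) - τ))
      (nhdsWithin (Real.exp ((2 * n + 1) * s))
        {τ : ℝ | Real.exp s < τ ∧ (∀ k : ℕ, τ ≠ Real.exp ((2 * k + 1) * s)) ∧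
          (∑' k : ℕ, 1 / (Real.exp ((2 * k + 1) * s) - τ)) ≠ 0})
      (nhds L) := by
  set p : ℕ → ℝ := fun k => Real.exp ((2 * k + 1) * s)
  set c := (1 - Real.exp (-(2 * s))) / 2
  have hc : 0 < c := half_pos (sub_pos.mpr (Real.exp_lt_one_iff.mpr (by linarith)))
  set B := Metric.closedBall (p n) (c * p n)
  have hB : B ∈ 𝓝 (p n) := Metric.closedBall_mem_nhds _ (mul_pos hc (Real.exp_pos _))
  have hd0 : ∀ k, 0 < c * p k := fun k => mul_pos hc (Real.exp_pos _)
  set a : ℕ → ℝ := fun k => 2 * (n : ℝ) - 2 * k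
  set b : ℕ → ℝ := fun k => if k = n then 0 else 1
  have ha : ∀ k, a k ≠ 0 → ∀ τ ∈ B, c * p k ≤ |p k - τ| := fun k hk _ =>
    mul_exp_odd_le_abs_sub hs.le fun h => hk (by simp [a, h])
  have hb : ∀ k, b k ≠ 0 → ∀ τ ∈ B, c * p k ≤ |p k - τ| := fun k hk _ =>
    mul_exp_odd_le_abs_sub hs.le fun h => hk (by simp [b, h])
  have ha_sum : Summable fun k => |a k| / (c * p k) :=
    summable_abs_div_exp_odd hs hc (C := 2 * n + 2) fun k => by
      simp only [a]; rw [abs_le]; constructor <;> nlinarith [(k.cast_nonneg : (0 : ℝ) ≤ k)]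
  have hb_sum : Summable fun k => |b k| / (c * p k) :=
    summable_abs_div_exp_odd hs hc (C := 1) fun k => by
      simp only [b]; split_ifs <;> simp; positivity
  have hcont : ContinuousAt
      (fun τ => (∑' k, a k / (p k - τ)) / (1 + (p n - τ) * ∑' k, b k / (p k - τ))) (p n) := by
    refine ((continuousOn_tsum_div_sub ha hd0 ha_sum).continuousAt hB).div
      (continuousAt_const.add ((continuousAt_const.sub continuousAt_id).mul
        ((continuousOn_tsum_div_sub hb hd0 hb_sum).continuousAt hB))) ?_
    simp
  refine ⟨_, (hcont.tendsto.mono_left nhdsWithin_le_nhds).congr' ?_⟩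
  filter_upwards [self_mem_nhdsWithin, mem_nhdsWithin_of_mem_nhds hB] with τ hτS hτB
  obtain ⟨-, hτ, hG⟩ := hτS
  exact (sub_tsum_div_tsum_div_eq hτ (summable_div_sub hb hd0 hb_sum hτB)
    (summable_div_sub ha hd0 ha_sum hτB) hG).symm
end
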